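/- Let (L, Δ) be an objective partial group in which Δ is a collection of subgroups of some S ∈ Δ. For g ∈ L define S_g = {x ∈ D(g) ∩ S : x^g ∈ S}. Then S_g ∈ Δ (in particular S_g is a subgroup of S), conjugation c_g : S_g → (S_g)^g is an isomorphism of groups with S_{g⁻¹} = (S_g)^g, and for every subgroup P ≤ S_g the conjugate P^g is defined and is a subgroup of S. -/

import Mathlib

universe u

structure PartialGroupOn (L : Type u) : Type u where
  nonempty : Nonempty L
  D : Set (List L)
  Pi : List L → L
  inv : L → L
  mem_single : ∀ x : L, [x] ∈ D
  mem_append_left : ∀ u v : List L, u ++ v ∈ D → u ∈ D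
  mem_append_right : ∀ u v : List L, u ++ v ∈ D → v ∈ D
  Pi_single : ∀ x : L, Pi [x] = x
  mem_assoc : ∀ u v w : List L, u ++ v ++ w ∈ D → u ++ [Pi v] ++ w ∈ D
  Pi_assoc : ∀ u v w : List L, u ++ v ++ w ∈ D →
    Pi (u ++ v ++ w) = Pi (u ++ [Pi v] ++ w)
  inv_inv : ∀ x : L, inv (inv x) = x
  mem_inv : ∀ w ∈ D, (w.reverse.map inv) ++ w ∈ D
  Pi_inv : ∀ w ∈ D, Pi ((w.reverse.map inv) ++ w) = Pi []

namespace PartialGroupOn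

variable {L : Type u} (M : PartialGroupOn L)

/-- The inverse of a word: reverse the word and invert each entry. -/
def wordInv (w : List L) : List L := w.reverse.map M.inv

/-- The identity element `1 = Π(∅)`. -/
def one : L := M.Pi []

/-- Conjugation `x ↦ x^g = Π(g⁻¹, x, g)`. -/
def conj (x g : L) : L := M.Pi [M.inv g, x, g]

/-- `D(g)` is the set of `x` for which `x^g` is defined. -/
def Dg (g : L) : Set L := {x | [M.inv g, x, g] ∈ M.D}

/-- A partial subgroup: a nonempty subset closed under inversion and under the
product applied to words in `D` with entries in the subset. -/
def IsPartialSubgroup (H : Set L) : Prop :=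
  H.Nonempty ∧ (∀ x ∈ H, M.inv x ∈ H) ∧
    ∀ w : List L, (∀ x ∈ w, x ∈ H) → w ∈ M.D → M.Pi w ∈ H

/-- A partial normal subgroup of `L`. -/
def IsPartialNormal (N : Set L) : Prop :=
  M.IsPartialSubgroup N ∧
    ∀ x ∈ N, ∀ g : L, [M.inv g, x, g] ∈ M.D → M.conj x g ∈ N

/-- A subgroup of `L`: a partial subgroup `H` with `W(H) ⊆ D`. -/
def IsSubgroup (H : Set L) : Prop :=
  M.IsPartialSubgroup H ∧ ∀ w : List L, (∀ x ∈ w, x ∈ H) → w ∈ M.D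

/-- `X ⊆ D(g)`, i.e. `X^g` is defined. -/
def setConjDef (X : Set L) (g : L) : Prop := ∀ x ∈ X, [M.inv g, x, g] ∈ M.D

/-- The conjugate set `X^g`. -/
def setConj (X : Set L) (g : L) : Set L := {y | ∃ x ∈ X, y = M.conj x g}

/-- `viaChain Δ w X` says that `w = (g₁,…,gₙ)` is in `D` via the chain
`X = X₀, X₁ = X₀^{g₁}, …` of members of `Δ`. -/
def viaChain (Δ : Set (Set L)) : List L → Set L → Prop
  | [], X => X ∈ Δ
  | g :: w, X => X ∈ Δ ∧ M.setConjDef X g ∧ viaChain Δ w (M.setConj X g)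

/-- `(L, Δ)` is an objective partial group: every member of `Δ` is a subgroup,
(O1) `D = D_Δ`, and (O2) the overgroup-closure condition. -/
def Objective (Δ : Set (Set L)) : Prop :=
  (∀ X ∈ Δ, M.IsSubgroup X) ∧
  (M.D = {w | ∃ X : Set L, M.viaChain Δ w X}) ∧
  (∀ X ∈ Δ, ∀ Y ∈ Δ, ∀ g : L, M.setConjDef X g → M.IsSubgroup (M.setConj X g) →
    M.setConj X g ⊆ Y →
    ∀ Z : Set L, M.IsSubgroup Z → M.setConj X g ⊆ Z → Z ⊆ Y → Z ∈ Δ)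

/-- The normalizer `N_L(X) = {g : X^g = X}`. -/
def normalizer (X : Set L) : Set L := {g | M.setConjDef X g ∧ M.setConj X g = X}

/-- `S_g = {x ∈ D(g) ∩ S : x^g ∈ S}`. -/
def Sg (S : Set L) (g : L) : Set L :=
  {x | x ∈ S ∧ [M.inv g, x, g] ∈ M.D ∧ M.conj x g ∈ S}

/-- `S_w`: the set of `x ∈ S` successively conjugated into `S` by the entries
of the word `w`. -/
def Sw (S : Set L) : List L → Set L
  | [] => S
  | g :: w => {x | x ∈ S ∧ [M.inv g, x, g] ∈ M.D ∧ M.conj x g ∈ Sw S w}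

/-- A `p`-subgroup: a subgroup whose cardinality is a power of `p`. -/
def IsPSubgroup (p : ℕ) (H : Set L) : Prop :=
  M.IsSubgroup H ∧ ∃ n : ℕ, Nat.card H = p ^ n

/-- `(L, Δ, S)` is a locality. -/
def IsLocality (p : ℕ) (Δ : Set (Set L)) (S : Set L) : Prop :=
  p.Prime ∧ Finite L ∧ S ∈ Δ ∧ (∀ X ∈ Δ, X ⊆ S) ∧ M.Objective Δ ∧
    M.IsPSubgroup p S ∧
    ∀ H : Set L, M.IsPSubgroup p H → S ⊆ H → H = S

/-- The product set `XY` of two subsets of `L`. -/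
def setProd (X Y : Set L) : Set L :=
  {z | ∃ a ∈ X, ∃ b ∈ Y, [a, b] ∈ M.D ∧ z = M.Pi [a, b]}

/-- A homomorphism of partial groups. -/
def IsHom {L' : Type u} (M' : PartialGroupOn L') (β : L → L') : Prop :=
  (∀ w ∈ M.D, w.map β ∈ M'.D) ∧ ∀ w ∈ M.D, β (M.Pi w) = M'.Pi (w.map β)

end PartialGroupOn

open PartialGroupOn

variable {L : Type u}


/-!
Since `(g) ∈ D`, some `V ∈ Δ` has `V^g` defined and in `Δ`, and every such `V` lies in `S_g`;
so by (O2) it suffices to show that `S_g` is a subgroup on which `c_g` is multiplicative.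
The crux is that for `y ∈ S_g` and `b = y^g`, the conjugate `V^y` is again such a witness:
for `ξ ∈ V` the word `(b⁻¹, g⁻¹, y, y⁻¹, ξ, y, y⁻¹, g, b)` is in `D` via `(V^g)^b`, and
collapsing it in two ways shows that `(ξ^y)^g` is defined and equals `(ξ^g)^b`.
For `x, y ∈ S_g`, choosing `V` with `(g⁻¹, x, g) ∈ D` via `V^g` then puts `(g⁻¹, x, y, g)` and
`(g⁻¹, x, g, y^g)` in `D`, which gives `xy ∈ S_g` and `(xy)^g = x^g y^g`.
-/

namespace PartialGroupOn

variable (M : PartialGroupOn L)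

section Basic

variable {x y : L}

theorem mem_D_infix (u v w : List L) (h : u ++ v ++ w ∈ M.D) : v ∈ M.D :=
  M.mem_append_right u v (M.mem_append_left (u ++ v) w h)

theorem collapse (u v w : List L) {c : L} (h : u ++ v ++ w ∈ M.D) (hc : M.Pi v = c) :
    u ++ [c] ++ w ∈ M.D ∧ M.Pi (u ++ v ++ w) = M.Pi (u ++ [c] ++ w) := by
  subst hc
  exact ⟨M.mem_assoc u v w h, M.Pi_assoc u v w h⟩

theorem Pi_cons {a : L} {w : List L} (h : a :: w ∈ M.D) : M.Pi (a :: w) = M.Pi [a, M.Pi w] := by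
  simpa using M.Pi_assoc [a] w [] (by simpa using h)

theorem Pi_inv_mul (x : L) : M.Pi [M.inv x, x] = M.one := M.Pi_inv [x] (M.mem_single x)

theorem Pi_mul_inv (x : L) : M.Pi [x, M.inv x] = M.one := by
  simpa only [M.inv_inv] using M.Pi_inv_mul (M.inv x)

theorem Pi_one_mul (x : L) : M.Pi [M.one, x] = x :=
  (M.Pi_assoc [] [] [x] (M.mem_single x)).symm.trans (M.Pi_single x)

theorem Pi_mul_one (x : L) : M.Pi [x, M.one] = x :=
  (M.Pi_assoc [x] [] [] (M.mem_single x)).symm.trans (M.Pi_single x)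

theorem Pi_inv_mul_cancel_left (h : [x, y] ∈ M.D) : M.Pi [M.inv x, M.Pi [x, y]] = y := by
  have h3 : [M.inv x, x, y] ∈ M.D := M.mem_append_right [M.inv y] _ (M.mem_inv _ h)
  calc M.Pi [M.inv x, M.Pi [x, y]] = M.Pi [M.inv x, x, y] :=
        (M.Pi_assoc [M.inv x] [x, y] [] h3).symm
    _ = M.Pi [M.Pi [M.inv x, x], y] := M.Pi_assoc [] [M.inv x, x] [y] h3
    _ = y := by rw [Pi_inv_mul, Pi_one_mul]

theorem eq_inv_of_Pi_eq_one (h : [x, y] ∈ M.D) (hxy : M.Pi [x, y] = M.one) : y = M.inv x :=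
  calc y = M.Pi [M.inv x, M.Pi [x, y]] := (M.Pi_inv_mul_cancel_left h).symm
    _ = M.inv x := by rw [hxy, Pi_mul_one]

theorem Pi_wordInv {w : List L} (h : w ∈ M.D) : M.Pi (M.wordInv w) = M.inv (M.Pi w) := by
  obtain ⟨h2, e2⟩ := M.collapse [] (M.wordInv w) w (M.mem_inv w h) rfl
  obtain ⟨h3, e3⟩ := M.collapse [M.Pi (M.wordInv w)] w [] (by simpa using h2) rfl
  have hone : M.Pi [M.Pi (M.wordInv w), M.Pi w] = M.one :=
    calc M.Pi [M.Pi (M.wordInv w), M.Pi w] = M.Pi ([M.Pi (M.wordInv w)] ++ w) := by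
          simpa using e3.symm
      _ = M.Pi (M.wordInv w ++ w) := e2.symm
      _ = M.one := M.Pi_inv w h
  rw [M.eq_inv_of_Pi_eq_one h3 hone, M.inv_inv]

end Basic

section Conj

variable {g x : L}

theorem wordInv_conj_word : M.wordInv [M.inv g, x, g] = [M.inv g, M.inv x, g] := by
  simp [wordInv, M.inv_inv]

theorem conj_inv_mem (h : [M.inv g, x, g] ∈ M.D) : [M.inv g, M.inv x, g] ∈ M.D :=
  M.wordInv_conj_word ▸ M.mem_append_left _ _ (M.mem_inv _ h)

theorem conj_inv (h : [M.inv g, x, g] ∈ M.D) : M.conj (M.inv x) g = M.inv (M.conj x g) := by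
  have e := M.Pi_wordInv h
  rwa [wordInv_conj_word] at e

theorem Pi_mul_conj (h : [M.inv g, x, g] ∈ M.D) : M.Pi [x, g] = M.Pi [g, M.conj x g] := by
  have h2 : [M.inv g, M.Pi [x, g]] ∈ M.D := M.mem_assoc [M.inv g] [x, g] [] h
  have e2 : M.Pi [M.inv g, M.Pi [x, g]] = M.conj x g := (M.Pi_assoc [M.inv g] [x, g] [] h).symm
  calc M.Pi [x, g] = M.Pi [M.inv (M.inv g), M.Pi [M.inv g, M.Pi [x, g]]] :=
        (M.Pi_inv_mul_cancel_left h2).symm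
    _ = M.Pi [g, M.conj x g] := by rw [M.inv_inv, e2]

/-- Inverting `(g⁻¹, x, g)` twice exhibits this word as a subword. -/
theorem conj_word_extend_mem (h : [M.inv g, x, g] ∈ M.D) :
    [g, M.inv g, x, g, M.inv g] ∈ M.D := by
  have h1 := M.mem_inv _ (M.mem_inv _ h)
  simp only [List.map_cons, List.map_nil, List.reverse_cons, List.reverse_nil, M.inv_inv,
    List.nil_append, List.cons_append] at h1
  exact M.mem_D_infix [M.inv g, M.inv x] _ [M.inv x, g, M.inv g, x, g] h1

theorem Pi_conj_word_extend (h : [M.inv g, x, g] ∈ M.D) :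
    M.Pi [g, M.inv g, x, g, M.inv g] = x := by
  obtain ⟨m1, e1⟩ := M.collapse [] [g, M.inv g] [x, g, M.inv g]
    (M.conj_word_extend_mem h) (M.Pi_mul_inv g)
  obtain ⟨m2, e2⟩ := M.collapse [] [M.one, x] [g, M.inv g] m1 (M.Pi_one_mul x)
  obtain ⟨-, e3⟩ := M.collapse [x] [g, M.inv g] [] m2 (M.Pi_mul_inv g)
  exact e1.trans (e2.trans (e3.trans (M.Pi_mul_one x)))

theorem conj_conj_inv_mem (h : [M.inv g, x, g] ∈ M.D) :
    [M.inv (M.inv g), M.conj x g, M.inv g] ∈ M.D := by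
  rw [M.inv_inv]
  exact M.mem_assoc [g] [M.inv g, x, g] [M.inv g] (M.conj_word_extend_mem h)

theorem conj_conj_inv (h : [M.inv g, x, g] ∈ M.D) : M.conj (M.conj x g) (M.inv g) = x :=
  calc M.conj (M.conj x g) (M.inv g) = M.Pi [g, M.conj x g, M.inv g] := by rw [conj, M.inv_inv]
    _ = M.Pi [g, M.inv g, x, g, M.inv g] :=
        (M.Pi_assoc [g] [M.inv g, x, g] [M.inv g] (M.conj_word_extend_mem h)).symm
    _ = x := M.Pi_conj_word_extend h

end Conj

section Subgroup

variable {M} {H T P : Set L} {a b g s : L}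

theorem IsSubgroup.mem_D (hH : M.IsSubgroup H) {w : List L} (hw : ∀ x ∈ w, x ∈ H) :
    w ∈ M.D :=
  hH.2 w hw

theorem IsSubgroup.Pi_mem (hH : M.IsSubgroup H) {w : List L} (hw : ∀ x ∈ w, x ∈ H) :
    M.Pi w ∈ H :=
  hH.1.2.2 w hw (hH.mem_D hw)

theorem IsSubgroup.inv_mem (hH : M.IsSubgroup H) (ha : a ∈ H) : M.inv a ∈ H :=
  hH.1.2.1 a ha

theorem IsSubgroup.one_mem (hH : M.IsSubgroup H) : M.one ∈ H :=
  hH.Pi_mem (w := []) (by simp)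

theorem IsSubgroup.conj_mem (hH : M.IsSubgroup H) (ha : a ∈ H) (hs : s ∈ H) :
    M.conj a s ∈ H :=
  hH.Pi_mem (by simp [ha, hs, hH.inv_mem hs])

theorem IsSubgroup.setConjDef (hH : M.IsSubgroup H) {X : Set L} (hX : X ⊆ H) (hs : s ∈ H) :
    M.setConjDef X s :=
  fun _ hx => hH.mem_D (by simp [hX hx, hs, hH.inv_mem hs])

theorem IsSubgroup.setConj_self (hH : M.IsSubgroup H) (hs : s ∈ H) : M.setConj H s = H := by
  ext y
  constructor
  · rintro ⟨x, hx, rfl⟩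
    exact hH.conj_mem hx hs
  · intro hy
    have hd : [M.inv (M.inv s), y, M.inv s] ∈ M.D :=
      hH.mem_D (by simp [hy, hH.inv_mem hs, hH.inv_mem (hH.inv_mem hs)])
    refine ⟨M.conj y (M.inv s), hH.conj_mem hy (hH.inv_mem hs), ?_⟩
    simpa only [M.inv_inv] using (M.conj_conj_inv hd).symm

theorem IsSubgroup.conj_Pi (hT : M.IsSubgroup T) (ha : a ∈ T) (hb : b ∈ T) (hs : s ∈ T) :
    M.conj (M.Pi [a, b]) s = M.Pi [M.conj a s, M.conj b s] := by
  have hs' := hT.inv_mem hs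
  have hone := hT.one_mem
  have has := hT.conj_mem ha hs
  calc M.conj (M.Pi [a, b]) s = M.Pi [M.inv s, a, b, s] :=
        (M.Pi_assoc [M.inv s] [a, b] [s] (hT.mem_D (by simp [*]))).symm
    _ = M.Pi [M.inv s, M.Pi [a, M.one], b, s] := by rw [M.Pi_mul_one]
    _ = M.Pi [M.inv s, a, M.one, b, s] :=
        (M.Pi_assoc [M.inv s] [a, M.one] [b, s] (hT.mem_D (by simp [*]))).symm
    _ = M.Pi [M.inv s, a, M.Pi [s, M.inv s], b, s] := by rw [M.Pi_mul_inv]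
    _ = M.Pi [M.inv s, a, s, M.inv s, b, s] :=
        (M.Pi_assoc [M.inv s, a] [s, M.inv s] [b, s] (hT.mem_D (by simp [*]))).symm
    _ = M.Pi [M.conj a s, M.inv s, b, s] :=
        M.Pi_assoc [] [M.inv s, a, s] [M.inv s, b, s] (hT.mem_D (by simp [*]))
    _ = M.Pi [M.conj a s, M.conj b s] :=
        M.Pi_assoc [M.conj a s] [M.inv s, b, s] [] (hT.mem_D (by simp [*]))

theorem IsSubgroup.of_subset (hT : M.IsSubgroup T) (hHT : H ⊆ T) (hne : H.Nonempty)
    (hinv : ∀ x ∈ H, M.inv x ∈ H) (hmul : ∀ x ∈ H, ∀ y ∈ H, M.Pi [x, y] ∈ H) :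
    M.IsSubgroup H := by
  have hD : ∀ w : List L, (∀ x ∈ w, x ∈ H) → w ∈ M.D := fun w hw =>
    hT.mem_D fun x hx => hHT (hw x hx)
  have hPi : ∀ w : List L, (∀ x ∈ w, x ∈ H) → M.Pi w ∈ H := by
    intro w hw
    induction w with
    | nil =>
      obtain ⟨x, hx⟩ := hne
      have h1 := hmul x hx _ (hinv x hx)
      rwa [M.Pi_mul_inv] at h1
    | cons a w ih =>
      rw [M.Pi_cons (hD _ hw)]
      exact hmul a (hw a (by simp)) _ (ih fun x hx => hw x (by simp [hx]))
  exact ⟨⟨hne, hinv, fun w hw _ => hPi w hw⟩, hD⟩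

theorem IsSubgroup.setConj (hT : M.IsSubgroup T) (hP : M.IsSubgroup P)
    (hd : M.setConjDef P g) (hPT : M.setConj P g ⊆ T)
    (hmul : ∀ a ∈ P, ∀ b ∈ P, M.conj (M.Pi [a, b]) g = M.Pi [M.conj a g, M.conj b g]) :
    M.IsSubgroup (M.setConj P g) := by
  refine hT.of_subset hPT ?_ ?_ ?_
  · obtain ⟨x, hx⟩ := hP.1.1
    exact ⟨_, x, hx, rfl⟩
  · rintro _ ⟨x, hx, rfl⟩
    exact ⟨M.inv x, hP.inv_mem hx, (M.conj_inv (hd x hx)).symm⟩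
  · rintro _ ⟨a, ha, rfl⟩ _ ⟨b, hb, rfl⟩
    exact ⟨M.Pi [a, b], hP.Pi_mem (by simp [ha, hb]), (hmul a ha b hb).symm⟩

end Subgroup

theorem injOn_conj (g : L) : Set.InjOn (fun x => M.conj x g) (M.Dg g) := fun a ha b hb hab => by
  rw [← M.conj_conj_inv ha, ← M.conj_conj_inv hb]
  exact congrArg (M.conj · (M.inv g)) hab

theorem setConj_Sg (S : Set L) (g : L) : M.setConj (M.Sg S g) g = M.Sg S (M.inv g) := by
  ext z
  constructor
  · rintro ⟨x, ⟨hxS, hxD, hxg⟩, rfl⟩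
    exact ⟨hxg, M.conj_conj_inv_mem hxD, (M.conj_conj_inv hxD).symm ▸ hxS⟩
  · rintro ⟨hzS, hzD, hzg⟩
    have hD := M.conj_conj_inv_mem hzD
    have he := M.conj_conj_inv hzD
    simp only [M.inv_inv] at hD he
    exact ⟨_, ⟨hzg, hD, he.symm ▸ hzS⟩, he.symm⟩

section Objective

variable {M} {Δ : Set (Set L)} {S X Z V : Set L} {g s x y ξ : L} {w : List L}

theorem viaChain_cons :
    M.viaChain Δ (g :: w) X ↔ X ∈ Δ ∧ M.setConjDef X g ∧ M.viaChain Δ w (M.setConj X g) :=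
  Iff.rfl

theorem viaChain_singleton :
    M.viaChain Δ [g] X ↔ X ∈ Δ ∧ M.setConjDef X g ∧ M.setConj X g ∈ Δ :=
  Iff.rfl

theorem setConjDef_setConj_inv (hd : M.setConjDef X g) :
    M.setConjDef (M.setConj X g) (M.inv g) := by
  rintro _ ⟨x, hx, rfl⟩
  exact M.conj_conj_inv_mem (hd x hx)

theorem setConj_setConj_inv (hd : M.setConjDef X g) : M.setConj (M.setConj X g) (M.inv g) = X := by
  ext y
  constructor
  · rintro ⟨_, ⟨x, hx, rfl⟩, rfl⟩
    rwa [M.conj_conj_inv (hd x hx)]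
  · intro hy
    exact ⟨_, ⟨y, hy, rfl⟩, (M.conj_conj_inv (hd y hy)).symm⟩

theorem viaChain_inv_cons (h : M.viaChain Δ [g] X) (hw : M.viaChain Δ w X) :
    M.viaChain Δ (M.inv g :: w) (M.setConj X g) := by
  obtain ⟨-, hd, hXg⟩ := viaChain_singleton.1 h
  exact viaChain_cons.2 ⟨hXg, setConjDef_setConj_inv hd, (setConj_setConj_inv hd).symm ▸ hw⟩

theorem subset_Sg (hsub : ∀ X ∈ Δ, X ⊆ S) (hV : M.viaChain Δ [g] V) : V ⊆ M.Sg S g := by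
  obtain ⟨hVΔ, hVd, hWΔ⟩ := viaChain_singleton.1 hV
  exact fun x hx => ⟨hsub V hVΔ hx, hVd x hx, hsub _ hWΔ ⟨x, hx, rfl⟩⟩

theorem Objective.isSubgroup (hobj : M.Objective Δ) (hX : X ∈ Δ) : M.IsSubgroup X :=
  hobj.1 X hX

theorem Objective.mem_D_of_viaChain (hobj : M.Objective Δ) (h : M.viaChain Δ w X) : w ∈ M.D :=
  hobj.2.1 ▸ ⟨X, h⟩

theorem Objective.exists_viaChain (hobj : M.Objective Δ) (h : w ∈ M.D) :
    ∃ X, M.viaChain Δ w X := by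
  rwa [hobj.2.1] at h

theorem Objective.mem_of_subset (hobj : M.Objective Δ) (hS : S ∈ Δ) (hX : X ∈ Δ)
    (hZ : M.IsSubgroup Z) (hXZ : X ⊆ Z) (hZS : Z ⊆ S) : Z ∈ Δ := by
  have hXsub := hobj.isSubgroup hX
  obtain ⟨s, hs⟩ := hXsub.1.1
  have hXs := hXsub.setConj_self hs
  refine hobj.2.2 X hX S hS s (hXsub.setConjDef subset_rfl hs) ?_ ?_ Z hZ ?_ hZS <;> rw [hXs]
  exacts [hXsub, hXZ.trans hZS, hXZ]

theorem Objective.setConj_mem (hobj : M.Objective Δ) (hS : S ∈ Δ) (hsub : ∀ X ∈ Δ, X ⊆ S)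
    (hX : X ∈ Δ) (hs : s ∈ S) : M.setConj X s ∈ Δ := by
  have hSsub := hobj.isSubgroup hS
  have hXS := hsub X hX
  have hd := hSsub.setConjDef hXS hs
  have hXsS : M.setConj X s ⊆ S := by
    rintro _ ⟨x, hx, rfl⟩
    exact hSsub.conj_mem (hXS hx) hs
  have hXs := hSsub.setConj (hobj.isSubgroup hX) hd hXsS
    fun a ha b hb => hSsub.conj_Pi (hXS ha) (hXS hb) hs
  exact hobj.2.2 X hX S hS s hd hXs hXsS _ hXs subset_rfl hXsS

theorem Objective.viaChain_cons_of_mem (hobj : M.Objective Δ) (hS : S ∈ Δ)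
    (hsub : ∀ X ∈ Δ, X ⊆ S) (hX : X ∈ Δ) (hs : s ∈ S)
    (hw : M.viaChain Δ w (M.setConj X s)) : M.viaChain Δ (s :: w) X :=
  viaChain_cons.2 ⟨hX, (hobj.isSubgroup hS).setConjDef (hsub X hX) hs, hw⟩

theorem Objective.viaChain_singleton_of_mem (hobj : M.Objective Δ) (hS : S ∈ Δ)
    (hsub : ∀ X ∈ Δ, X ⊆ S) (hX : X ∈ Δ) (hs : s ∈ S) : M.viaChain Δ [s] X :=
  hobj.viaChain_cons_of_mem hS hsub hX hs (hobj.setConj_mem hS hsub hX hs)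

theorem Objective.viaChain_cons_self (hobj : M.Objective Δ) (hX : X ∈ Δ) (hξ : ξ ∈ X)
    (hw : M.viaChain Δ w X) : M.viaChain Δ (ξ :: w) X :=
  viaChain_cons.2 ⟨hX, (hobj.isSubgroup hX).setConjDef subset_rfl hξ,
    ((hobj.isSubgroup hX).setConj_self hξ).symm ▸ hw⟩

theorem Objective.exists_viaChain_conj (hobj : M.Objective Δ) (h : [M.inv g, x, g] ∈ M.D) :
    ∃ V, M.viaChain Δ [g] V ∧ M.viaChain Δ [g] (M.setConj V x) := by
  obtain ⟨X, hX⟩ := hobj.exists_viaChain h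
  obtain ⟨hXΔ, hXd, hV⟩ := viaChain_cons.1 hX
  obtain ⟨hVΔ, -, hVx⟩ := viaChain_cons.1 hV
  refine ⟨_, ?_, hVx⟩
  simpa only [M.inv_inv] using
    viaChain_inv_cons (w := []) (viaChain_singleton.2 ⟨hXΔ, hXd, hVΔ⟩) hXΔ

theorem Objective.conj_conj_of_mem_Sg (hobj : M.Objective Δ) (hS : S ∈ Δ)
    (hsub : ∀ X ∈ Δ, X ⊆ S) (hV : M.viaChain Δ [g] V) (hy : y ∈ M.Sg S g) (hξ : ξ ∈ V) :
    [M.inv g, M.conj ξ y, g] ∈ M.D ∧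
      M.conj (M.conj ξ y) g = M.conj (M.conj ξ g) (M.conj y g) := by
  obtain ⟨hyS, hyD, hbS⟩ := hy
  set b := M.conj y g
  obtain ⟨hVΔ, hVd, hWΔ⟩ := viaChain_singleton.1 hV
  have hWb : M.viaChain Δ [b] (M.setConj V g) := hobj.viaChain_singleton_of_mem hS hsub hWΔ hbS
  have hVy : M.viaChain Δ [y] V := hobj.viaChain_singleton_of_mem hS hsub hVΔ hyS
  -- via the chain (V^g)^b, V^g, V, V^y, V, V, V^y, V, V^g, (V^g)^b
  have hw : [M.inv b, M.inv g, y, M.inv y, ξ, y, M.inv y, g, b] ∈ M.D :=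
    hobj.mem_D_of_viaChain <| viaChain_inv_cons hWb <| viaChain_inv_cons hV <|
      hobj.viaChain_cons_of_mem hS hsub hVΔ hyS <| viaChain_inv_cons hVy <|
      hobj.viaChain_cons_self hVΔ hξ <| hobj.viaChain_cons_of_mem hS hsub hVΔ hyS <|
      viaChain_inv_cons hVy <| viaChain_cons.2 ⟨hVΔ, hVd, hWb⟩
  have hξy : [M.inv y, ξ, y] ∈ M.D := M.mem_D_infix [M.inv b, M.inv g, y] _ [M.inv y, g, b] hw
  have hygb : [M.inv y, g, b] ∈ M.D := M.mem_D_infix [M.inv b, M.inv g, y, M.inv y, ξ, y] _ [] hw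
  have hg : M.Pi [M.inv y, g, b] = g :=
    calc M.Pi [M.inv y, g, b] = M.Pi [M.inv y, M.Pi [g, b]] := M.Pi_assoc [M.inv y] [g, b] [] hygb
      _ = M.Pi [M.inv y, M.Pi [y, g]] := by rw [M.Pi_mul_conj hyD]
      _ = g := M.Pi_inv_mul_cancel_left (M.mem_D_infix [M.inv g] _ [] hyD)
  have hginv : M.Pi [M.inv b, M.inv g, y] = M.inv g := by
    simpa [wordInv, M.inv_inv, hg] using M.Pi_wordInv hygb
  obtain ⟨m1, e1⟩ := M.collapse [M.inv b, M.inv g, y] [M.inv y, ξ, y] [M.inv y, g, b] hw rfl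
  obtain ⟨m2, e2⟩ := M.collapse [] [M.inv b, M.inv g, y] [M.conj ξ y, M.inv y, g, b] m1 hginv
  obtain ⟨m3, e3⟩ := M.collapse [M.inv g, M.conj ξ y] [M.inv y, g, b] [] m2 hg
  obtain ⟨m4, e4⟩ := M.collapse [M.inv b, M.inv g] [y, M.inv y, ξ, y, M.inv y] [g, b] hw
    (M.Pi_conj_word_extend hξy)
  obtain ⟨-, e5⟩ := M.collapse [M.inv b] [M.inv g, ξ, g] [b] m4 rfl
  exact ⟨m3, (e1.trans (e2.trans e3)).symm.trans (e4.trans e5)⟩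

theorem Objective.viaChain_setConj_of_mem_Sg (hobj : M.Objective Δ) (hS : S ∈ Δ)
    (hsub : ∀ X ∈ Δ, X ⊆ S) (hV : M.viaChain Δ [g] V) (hy : y ∈ M.Sg S g) :
    M.viaChain Δ [g] (M.setConj V y) := by
  obtain ⟨hVΔ, -, hWΔ⟩ := viaChain_singleton.1 hV
  have key := fun ξ (hξ : ξ ∈ V) => hobj.conj_conj_of_mem_Sg hS hsub hV hy hξ
  have hE : M.setConj (M.setConj V y) g = M.setConj (M.setConj V g) (M.conj y g) := by
    ext z
    constructor
    · rintro ⟨_, ⟨ξ, hξ, rfl⟩, rfl⟩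
      exact ⟨_, ⟨ξ, hξ, rfl⟩, (key ξ hξ).2⟩
    · rintro ⟨_, ⟨ξ, hξ, rfl⟩, rfl⟩
      exact ⟨_, ⟨ξ, hξ, rfl⟩, (key ξ hξ).2.symm⟩
  refine viaChain_singleton.2 ⟨hobj.setConj_mem hS hsub hVΔ hy.1, ?_,
    hE ▸ hobj.setConj_mem hS hsub hWΔ hy.2.2⟩
  rintro _ ⟨ξ, hξ, rfl⟩
  exact (key ξ hξ).1

theorem Objective.Sg_words_mem (hobj : M.Objective Δ) (hS : S ∈ Δ) (hsub : ∀ X ∈ Δ, X ⊆ S)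
    (hx : x ∈ M.Sg S g) (hy : y ∈ M.Sg S g) :
    [M.inv g, x, y, g] ∈ M.D ∧ [M.inv g, x, g, M.conj y g] ∈ M.D := by
  obtain ⟨V, hV, hVx⟩ := hobj.exists_viaChain_conj hx.2.1
  obtain ⟨hVΔ, hVxd, hVxg⟩ := viaChain_singleton.1 hVx
  have hstart : ∀ {w}, M.viaChain Δ w (M.setConj V x) →
      M.viaChain Δ (M.inv g :: x :: w) (M.setConj V g) := fun hw =>
    viaChain_inv_cons hV (hobj.viaChain_cons_of_mem hS hsub (viaChain_singleton.1 hV).1 hx.1 hw)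
  exact ⟨hobj.mem_D_of_viaChain <| hstart <| hobj.viaChain_cons_of_mem hS hsub hVΔ hy.1 <|
      hobj.viaChain_setConj_of_mem_Sg hS hsub hVx hy,
    hobj.mem_D_of_viaChain <| hstart <|
      viaChain_cons.2 ⟨hVΔ, hVxd, hobj.viaChain_singleton_of_mem hS hsub hVxg hy.2.2⟩⟩

theorem Objective.conj_Pi_of_mem_Sg (hobj : M.Objective Δ) (hS : S ∈ Δ)
    (hsub : ∀ X ∈ Δ, X ⊆ S) (hx : x ∈ M.Sg S g) (hy : y ∈ M.Sg S g) :
    M.conj (M.Pi [x, y]) g = M.Pi [M.conj x g, M.conj y g] := by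
  obtain ⟨h4, h4'⟩ := hobj.Sg_words_mem hS hsub hx hy
  calc M.conj (M.Pi [x, y]) g = M.Pi [M.inv g, x, y, g] :=
        (M.Pi_assoc [M.inv g] [x, y] [g] h4).symm
    _ = M.Pi [M.inv g, x, M.Pi [y, g]] := M.Pi_assoc [M.inv g, x] [y, g] [] h4
    _ = M.Pi [M.inv g, x, M.Pi [g, M.conj y g]] := by rw [M.Pi_mul_conj hy.2.1]
    _ = M.Pi [M.inv g, x, g, M.conj y g] := (M.Pi_assoc [M.inv g, x] [g, M.conj y g] [] h4').symm
    _ = M.Pi [M.conj x g, M.conj y g] := M.Pi_assoc [] [M.inv g, x, g] [M.conj y g] h4'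

theorem Objective.isSubgroup_Sg (hobj : M.Objective Δ) (hS : S ∈ Δ) (hsub : ∀ X ∈ Δ, X ⊆ S)
    (g : L) : M.IsSubgroup (M.Sg S g) := by
  have hSsub := hobj.isSubgroup hS
  obtain ⟨V, hV⟩ := hobj.exists_viaChain (M.mem_single g)
  refine hSsub.of_subset (fun x hx => hx.1) ?_ ?_ ?_
  · obtain ⟨x, hx⟩ := (hobj.isSubgroup (viaChain_singleton.1 hV).1).1.1
    exact ⟨x, subset_Sg hsub hV hx⟩
  · rintro x ⟨hxS, hxD, hxg⟩
    exact ⟨hSsub.inv_mem hxS, M.conj_inv_mem hxD, M.conj_inv hxD ▸ hSsub.inv_mem hxg⟩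
  · intro x hx y hy
    refine ⟨hSsub.Pi_mem (by simp [hx.1, hy.1]),
      M.mem_assoc [M.inv g] [x, y] [g] (hobj.Sg_words_mem hS hsub hx hy).1, ?_⟩
    rw [hobj.conj_Pi_of_mem_Sg hS hsub hx hy]
    exact hSsub.Pi_mem (by simp [hx.2.2, hy.2.2])

theorem Objective.Sg_mem (hobj : M.Objective Δ) (hS : S ∈ Δ) (hsub : ∀ X ∈ Δ, X ⊆ S) (g : L) :
    M.Sg S g ∈ Δ := by
  obtain ⟨V, hV⟩ := hobj.exists_viaChain (M.mem_single g)
  exact hobj.mem_of_subset hS (viaChain_singleton.1 hV).1 (hobj.isSubgroup_Sg hS hsub g)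
    (subset_Sg hsub hV) fun x hx => hx.1

end Objective

end PartialGroupOn

theorem Sg_mem_and_conj (M : PartialGroupOn L) (Δ : Set (Set L)) (S : Set L)
    (hobj : M.Objective Δ) (hS : S ∈ Δ) (hsub : ∀ X ∈ Δ, X ⊆ S) (g : L) :
    M.Sg S g ∈ Δ ∧
    (∀ a ∈ M.Sg S g, ∀ b ∈ M.Sg S g,
      [a, b] ∈ M.D ∧ [M.conj a g, M.conj b g] ∈ M.D ∧
        M.conj (M.Pi [a, b]) g = M.Pi [M.conj a g, M.conj b g]) ∧
    (∀ a ∈ M.Sg S g, ∀ b ∈ M.Sg S g, M.conj a g = M.conj b g → a = b) ∧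
    M.setConj (M.Sg S g) g = M.Sg S (M.inv g) ∧
    (∀ P : Set L, M.IsSubgroup P → P ⊆ M.Sg S g →
      M.IsSubgroup (M.setConj P g) ∧ M.setConj P g ⊆ S) := by
  have hSsub := hobj.isSubgroup hS
  refine ⟨hobj.Sg_mem hS hsub g, fun a ha b hb => ⟨hSsub.mem_D (by simp [ha.1, hb.1]),
    hSsub.mem_D (by simp [ha.2.2, hb.2.2]), hobj.conj_Pi_of_mem_Sg hS hsub ha hb⟩,
    fun a ha b hb => M.injOn_conj g ha.2.1 hb.2.1, M.setConj_Sg S g, fun P hP hPg => ?_⟩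
  have hPS : M.setConj P g ⊆ S := by
    rintro _ ⟨x, hx, rfl⟩
    exact (hPg hx).2.2
  exact ⟨hSsub.setConj hP (fun x hx => (hPg hx).2.1) hPS
    fun a ha b hb => hobj.conj_Pi_of_mem_Sg hS hsub (hPg ha) (hPg hb), hPS⟩
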